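/- Let g(x,τ) = (2πτ)^{-1/2}·exp(−x²/(2τ)), f(c;γ) = (2π)^{-1/2}·exp(−(c−γ)²/2), and for h > 0, l < 0, l < c < h define F(c,h,l;γ) = Σ_{m∈ℤ} [ e^{2γ(l−h)m}·g(c − γ + 2(h−l)m, 1) − e^{2γ((h−l)m + l)}·g(c − γ − 2l − 2(h−l)m, 1) ]. Then the mixed second partial derivative satisfies −∂²F/∂h∂l = f(c;γ)·𝓡(h,l|c), where 𝓡(h,l|c) = 4·Σ_{m∈ℤ} m·[ m·𝒟(m(h−l), c) + (1−m)·𝒟(m(h−l)+l, c) ] and 𝒟(h,c) = ((c−2h)² − 1)·e^{2h(c−h)}. In particular, the joint probability density of the high, low and close values (H̄, L̄, C̄) of the Wiener process with drift γ and unit volatility on the unit time interval is Q̄(h,l,c;γ) = f(c;γ)·𝓡(h,l|c) on the region h > 0, l < 0, l < c < h. -/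

import Mathlib

/-!
The drift factors out of every term: `e^{2γu} g(c - γ - 2u, 1) = f(c;γ) e^{2u(c-u)}`, so
`F = f(c;γ) Σ_m [E(m(l-h)) - E(m(h-l)+l)]` with `E(u) = e^{2u(c-u)}`. For `h ≠ l` the arguments
grow linearly in `m`, so `E` and its derivatives (polynomials times `E`) are dominated by
`C e^{b|m| - δ²m²/2}` locally uniformly in `(h, l)`, and the series may be differentiated termwise
twice. As `E'' = 4𝒟`, this gives
`-∂²F/∂h∂l = f(c;γ) Σ_m [m² E''(m(l-h)) + m(1-m) E''(m(h-l)+l)]`,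
and reindexing `m ↦ -m` in the first sum turns this into `f(c;γ)·𝓡(h,l|c)`.
-/

/-- The Gaussian heat kernel `g(x,τ) = (2πτ)^{-1/2}·exp(−x²/(2τ))`. -/
noncomputable def gker (x τ : ℝ) : ℝ :=
  Real.exp (-x ^ 2 / (2 * τ)) / Real.sqrt (2 * Real.pi * τ)

/-- The density of the close value: `f(c;γ) = (2π)^{-1/2}·exp(−(c−γ)²/2)`. -/
noncomputable def fclose (c γ : ℝ) : ℝ :=
  Real.exp (-(c - γ) ^ 2 / 2) / Real.sqrt (2 * Real.pi)

/-- `𝒟(h,c) = ((c−2h)² − 1)·e^{2h(c−h)}`. -/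
noncomputable def Dfun (h c : ℝ) : ℝ :=
  ((c - 2 * h) ^ 2 - 1) * Real.exp (2 * h * (c - h))

/-- The conditional joint density of the high and low given the close:
`𝓡(h,l|c) = 4·Σ_{m∈ℤ} m·[m·𝒟(m(h−l),c) + (1−m)·𝒟(m(h−l)+l,c)]`. -/
noncomputable def Rcond (h l c : ℝ) : ℝ :=
  4 * ∑' m : ℤ, (m : ℝ) * ((m : ℝ) * Dfun ((m : ℝ) * (h - l)) c
    + (1 - (m : ℝ)) * Dfun ((m : ℝ) * (h - l) + l) c)

/-- The two-sided reflection solution at time `τ = 1`, as a function of `(c,h,l)`: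
`F(c,h,l;γ) = Σ_{m∈ℤ} [e^{2γ(l−h)m}·g(c−γ+2(h−l)m, 1) − e^{2γ((h−l)m+l)}·g(c−γ−2l−2(h−l)m, 1)]`. -/
noncomputable def Fser (γ c h l : ℝ) : ℝ :=
  ∑' m : ℤ,
    (Real.exp (2 * γ * (l - h) * (m : ℝ)) * gker (c - γ + 2 * (h - l) * (m : ℝ)) 1
      - Real.exp (2 * γ * ((h - l) * (m : ℝ) + l))
          * gker (c - γ - 2 * l - 2 * (h - l) * (m : ℝ)) 1)

open Real

def HasGaussianDecay (G : ℝ → ℝ) : Prop :=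
  ∃ C K : ℝ, 0 ≤ C ∧ 0 ≤ K ∧ ∀ u, |G u| ≤ C * exp (K * |u| - u ^ 2)

lemma summable_exp_mul_abs_sub_mul_sq (β : ℝ) {a : ℝ} (ha : 0 < a) :
    Summable fun m : ℤ => exp (β * |(m : ℝ)| - a * (m : ℝ) ^ 2) := by
  refine (summable_pow_mul_jacobiTheta₂_term_bound (β / (2 * π)) (div_pos ha pi_pos) 0).congr
    fun m => ?_
  rw [pow_zero, one_mul, Int.cast_abs]
  congr 1
  field_simp
  ring

lemma abs_le_exp_abs (x : ℝ) : |x| ≤ exp |x| := by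
  linarith [add_one_le_exp |x|]

lemma abs_one_sub_le_exp_abs (x : ℝ) : |1 - x| ≤ exp |x| := by
  have := abs_sub (1 : ℝ) x
  rw [abs_one] at this
  linarith [add_one_le_exp |x|]

lemma abs_sq_le_exp_two_mul_abs (x : ℝ) : |x ^ 2| ≤ exp (2 * |x|) := by
  rw [abs_pow, two_mul, exp_add, sq]
  exact mul_le_mul (abs_le_exp_abs x) (abs_le_exp_abs x) (abs_nonneg x) (exp_pos _).le

lemma abs_mul_one_sub_le_exp_two_mul_abs (x : ℝ) : |x * (1 - x)| ≤ exp (2 * |x|) := by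
  rw [abs_mul, two_mul, exp_add]
  exact mul_le_mul (abs_le_exp_abs x) (abs_one_sub_le_exp_abs x) (abs_nonneg _) (exp_pos _).le

lemma exists_ball_affine_bounds {p q r t x₀ : ℝ} (hx₀ : p * x₀ + q ≠ 0) :
    ∃ ε > 0, ∀ x ∈ Metric.ball x₀ ε, |p * x₀ + q| / 2 ≤ |p * x + q| ∧
      |p * x + q| ≤ |p * x₀ + q| + 1 ∧ |r * x + t| ≤ |r * x₀ + t| + 1 := by
  have ha : Continuous fun x => |p * x + q| := by fun_prop
  have hb : Continuous fun x => |r * x + t| := by fun_prop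
  have h₁ := (ha.tendsto x₀).eventually (lt_mem_nhds (half_lt_self (abs_pos.2 hx₀)))
  have h₂ := (ha.tendsto x₀).eventually (gt_mem_nhds (lt_add_one |p * x₀ + q|))
  have h₃ := (hb.tendsto x₀).eventually (gt_mem_nhds (lt_add_one |r * x₀ + t|))
  obtain ⟨ε, hε, hball⟩ := Metric.eventually_nhds_iff_ball.1 (h₁.and (h₂.and h₃))
  exact ⟨ε, hε, fun x hx => ⟨(hball x hx).1.le, (hball x hx).2.1.le, (hball x hx).2.2.le⟩⟩

namespace HasGaussianDecay

variable {G H : ℝ → ℝ}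

lemma add (hG : HasGaussianDecay G) (hH : HasGaussianDecay H) : HasGaussianDecay (G + H) := by
  obtain ⟨C₁, K₁, hC₁, hK₁, hG⟩ := hG
  obtain ⟨C₂, K₂, hC₂, hK₂, hH⟩ := hH
  refine ⟨C₁ + C₂, max K₁ K₂, by positivity, le_max_of_le_left hK₁, fun u => ?_⟩
  calc |G u + H u| ≤ |G u| + |H u| := abs_add_le _ _
    _ ≤ C₁ * exp (K₁ * |u| - u ^ 2) + C₂ * exp (K₂ * |u| - u ^ 2) := add_le_add (hG u) (hH u)
    _ ≤ (C₁ + C₂) * exp (max K₁ K₂ * |u| - u ^ 2) := by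
      rw [add_mul]
      gcongr
      exacts [le_max_left _ _, le_max_right _ _]

lemma linear_mul (hG : HasGaussianDecay G) (α β : ℝ) :
    HasGaussianDecay fun u => (α + β * u) * G u := by
  obtain ⟨C, K, hC, hK, hG⟩ := hG
  refine ⟨(|α| + 1) * C, K + |β|, by positivity, by positivity, fun u => ?_⟩
  have hlin : |α + β * u| ≤ (|α| + 1) * exp (|β| * |u|) := by
    calc |α + β * u| ≤ |α| + |β| * |u| := by
          rw [← abs_mul]; exact abs_add_le _ _
      _ ≤ (|α| + 1) * (|β| * |u| + 1) := by
          nlinarith [mul_nonneg (mul_nonneg (abs_nonneg α) (abs_nonneg β)) (abs_nonneg u)]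
      _ ≤ (|α| + 1) * exp (|β| * |u|) := by gcongr; exact add_one_le_exp _
  calc |(α + β * u) * G u| = |α + β * u| * |G u| := abs_mul _ _
    _ ≤ (|α| + 1) * exp (|β| * |u|) * (C * exp (K * |u| - u ^ 2)) :=
      mul_le_mul hlin (hG u) (abs_nonneg _) (by positivity)
    _ = (|α| + 1) * C * exp ((K + |β|) * |u| - u ^ 2) := by
      rw [mul_mul_mul_comm, ← exp_add]; ring_nf

lemma exists_summable_bound (hG : HasGaussianDecay G) (b : ℝ) {δ : ℝ} (hδ : 0 < δ) (Δ B : ℝ) :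
    ∃ v : ℤ → ℝ, Summable v ∧ ∀ (m : ℤ) (s t : ℝ), δ ≤ |s| → |s| ≤ Δ → |t| ≤ B →
      exp (b * |(m : ℝ)|) * |G (m * s + t)| ≤ v m := by
  obtain ⟨C, K, hC, hK, hG⟩ := hG
  refine ⟨fun m =>
      C * exp (K * B + B ^ 2) * exp ((b + K * Δ) * |(m : ℝ)| - δ ^ 2 / 2 * (m : ℝ) ^ 2),
    ((summable_exp_mul_abs_sub_mul_sq _ (by positivity)).mul_left _), fun m s t hδs hsΔ htB => ?_⟩
  set u := (m : ℝ) * s + t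
  have habs : |u| ≤ |(m : ℝ)| * Δ + B := by
    calc |u| ≤ |(m : ℝ)| * |s| + |t| := by rw [← abs_mul]; exact abs_add_le _ _
      _ ≤ |(m : ℝ)| * Δ + B := by gcongr
  -- `(m s + t)² ≥ (m s)²/2 - t²`, since the difference is `(m s + 2 t)²/2`
  have hsq : δ ^ 2 / 2 * (m : ℝ) ^ 2 - B ^ 2 ≤ u ^ 2 := by
    have hs : δ ^ 2 ≤ s ^ 2 := by rw [← sq_abs s]; gcongr
    have ht : t ^ 2 ≤ B ^ 2 := by rw [← sq_abs t]; gcongr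
    nlinarith [sq_nonneg ((m : ℝ) * s + 2 * t), sq_nonneg (m : ℝ)]
  calc exp (b * |(m : ℝ)|) * |G u| ≤ exp (b * |(m : ℝ)|) * (C * exp (K * |u| - u ^ 2)) :=
        mul_le_mul_of_nonneg_left (hG u) (exp_pos _).le
    _ = C * exp (b * |(m : ℝ)| + K * |u| - u ^ 2) := by
        rw [mul_left_comm, ← exp_add]; ring_nf
    _ ≤ C * exp (b * |(m : ℝ)| + K * (|(m : ℝ)| * Δ + B) - (δ ^ 2 / 2 * (m : ℝ) ^ 2 - B ^ 2)) := by
        gcongr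
    _ = C * exp (K * B + B ^ 2) * exp ((b + K * Δ) * |(m : ℝ)| - δ ^ 2 / 2 * (m : ℝ) ^ 2) := by
        rw [mul_assoc, ← exp_add]; ring_nf

lemma summable_mul_comp (hG : HasGaussianDecay G) {w : ℤ → ℝ} {b : ℝ}
    (hw : ∀ m, |w m| ≤ exp (b * |(m : ℝ)|)) {s : ℝ} (hs : s ≠ 0) (t : ℝ) :
    Summable fun m : ℤ => w m * G (m * s + t) := by
  obtain ⟨v, hv, hbound⟩ := hG.exists_summable_bound b (abs_pos.2 hs) |s| |t|
  refine hv.of_norm_bounded fun m => ?_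
  rw [norm_mul, Real.norm_eq_abs, Real.norm_eq_abs]
  exact (mul_le_mul_of_nonneg_right (hw m) (abs_nonneg _)).trans
    (hbound m s t le_rfl le_rfl le_rfl)

theorem hasDerivAt_tsum_mul_comp_affine {G G' : ℝ → ℝ} (hG : HasGaussianDecay G)
    (hG' : HasGaussianDecay G') (hderiv : ∀ u, HasDerivAt G (G' u) u) {w : ℤ → ℝ} {b : ℝ}
    (hw : ∀ m, |w m| ≤ exp (b * |(m : ℝ)|)) {p q r t x₀ : ℝ} (hx₀ : p * x₀ + q ≠ 0) :
    HasDerivAt (fun x => ∑' m : ℤ, w m * G (m * (p * x + q) + (r * x + t)))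
      (∑' m : ℤ, w m * ((m * p + r) * G' (m * (p * x₀ + q) + (r * x₀ + t)))) x₀ := by
  obtain ⟨ε, hε, hball⟩ := exists_ball_affine_bounds (r := r) (t := t) hx₀
  obtain ⟨v, hv, hbound⟩ := hG'.exists_summable_bound (b + 1) (half_pos (abs_pos.2 hx₀))
    (|p * x₀ + q| + 1) (|r * x₀ + t| + 1)
  have hx₀ε : x₀ ∈ Metric.ball x₀ ε := Metric.mem_ball_self hε
  refine hasDerivAt_tsum_of_isPreconnected
    (g := fun m x => w m * G (m * (p * x + q) + (r * x + t)))
    (g' := fun m x => w m * ((m * p + r) * G' (m * (p * x + q) + (r * x + t))))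
    (hv.mul_left (|p| + |r|)) Metric.isOpen_ball
    (convex_ball x₀ ε).isPreconnected (fun m x _ => ?_) (fun m x hx => ?_) hx₀ε
    (hG.summable_mul_comp hw hx₀ _) hx₀ε
  · have hinner : HasDerivAt (fun x => (m : ℝ) * (p * x + q) + (r * x + t)) (m * p + r) x := by
      have h := ((hasDerivAt_id' x).mul_const ((m : ℝ) * p + r)).add_const ((m : ℝ) * q + t)
      rw [one_mul] at h
      exact h.congr_of_eventuallyEq (.of_forall fun y => by ring)
    exact ((hderiv _).comp x hinner).const_mul (w m) |>.congr_deriv (by ring)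
  · obtain ⟨hs₁, hs₂, ht⟩ := hball x hx
    have hslope : |(m : ℝ) * p + r| ≤ (|p| + |r|) * exp |(m : ℝ)| := by
      calc |(m : ℝ) * p + r| ≤ |(m : ℝ)| * |p| + |r| := by rw [← abs_mul]; exact abs_add_le _ _
        _ ≤ (|p| + |r|) * (|(m : ℝ)| + 1) := by
          nlinarith [mul_nonneg (abs_nonneg (m : ℝ)) (abs_nonneg r), abs_nonneg p]
        _ ≤ (|p| + |r|) * exp |(m : ℝ)| := by gcongr; exact add_one_le_exp _
    rw [norm_mul, norm_mul, Real.norm_eq_abs, Real.norm_eq_abs, Real.norm_eq_abs]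
    calc |w m| * (|(m : ℝ) * p + r| * |G' (m * (p * x + q) + (r * x + t))|)
        ≤ exp (b * |(m : ℝ)|) * ((|p| + |r|) * exp |(m : ℝ)| *
            |G' (m * (p * x + q) + (r * x + t))|) := by gcongr; exact hw m
      _ = (|p| + |r|) * (exp ((b + 1) * |(m : ℝ)|) * |G' (m * (p * x + q) + (r * x + t))|) := by
        rw [show (b + 1) * |(m : ℝ)| = b * |(m : ℝ)| + |(m : ℝ)| by ring, exp_add]; ring
      _ ≤ (|p| + |r|) * v m := by gcongr; exact hbound m _ _ hs₁ hs₂ ht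

end HasGaussianDecay

/-- `e^{2u(c-u)} = g(c - 2u, 1) / g(c, 1)`: the weight with which the image of the source
across a barrier at height `u` enters the reflection series. -/
noncomputable def imageRatio (c u : ℝ) : ℝ := exp (2 * u * (c - u))

noncomputable def imageRatio' (c u : ℝ) : ℝ := (2 * c - 4 * u) * imageRatio c u

noncomputable def imageRatio'' (c u : ℝ) : ℝ := ((2 * c - 4 * u) ^ 2 - 4) * imageRatio c u

lemma hasDerivAt_imageRatio (c u : ℝ) : HasDerivAt (imageRatio c) (imageRatio' c u) u := by
  have h : HasDerivAt (fun x => 2 * x * (c - x)) (2 * c - 4 * u) u :=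
    ((hasDerivAt_id' u).const_mul 2).mul ((hasDerivAt_id' u).const_sub c) |>.congr_deriv (by ring)
  exact h.exp.congr_deriv (mul_comm _ _)

lemma hasDerivAt_imageRatio' (c u : ℝ) : HasDerivAt (imageRatio' c) (imageRatio'' c u) u := by
  refine ((hasDerivAt_id' u).const_mul 4).const_sub (2 * c) |>.mul (hasDerivAt_imageRatio c u)
    |>.congr_deriv ?_
  simp only [imageRatio'', imageRatio']
  ring

lemma hasGaussianDecay_imageRatio (c : ℝ) : HasGaussianDecay (imageRatio c) := by
  refine ⟨1, 2 * |c|, zero_le_one, by positivity, fun u => ?_⟩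
  rw [imageRatio, abs_of_pos (exp_pos _), one_mul, exp_le_exp]
  nlinarith [abs_mul c u, le_abs_self (c * u), sq_nonneg u]

lemma hasGaussianDecay_imageRatio' (c : ℝ) : HasGaussianDecay (imageRatio' c) := by
  convert (hasGaussianDecay_imageRatio c).linear_mul (2 * c) (-4) using 2 with u
  rw [imageRatio']
  ring

lemma hasGaussianDecay_imageRatio'' (c : ℝ) : HasGaussianDecay (imageRatio'' c) := by
  convert ((hasGaussianDecay_imageRatio' c).linear_mul (2 * c) (-4)).add
    ((hasGaussianDecay_imageRatio c).linear_mul (-4) 0) using 1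
  funext u
  simp only [imageRatio'', imageRatio', Pi.add_apply]
  ring

lemma imageRatio''_eq (c u : ℝ) : imageRatio'' c u = 4 * Dfun u c := by
  simp only [imageRatio'', imageRatio, Dfun]
  ring

lemma exp_mul_gker_eq (γ c u : ℝ) :
    exp (2 * γ * u) * gker (c - γ - 2 * u) 1 = fclose c γ * imageRatio c u := by
  simp only [gker, fclose, imageRatio, mul_one]
  rw [mul_div_assoc', div_mul_eq_mul_div, ← exp_add, ← exp_add]
  congr 2
  ring

lemma summable_imageRatio_comp (c : ℝ) {s : ℝ} (hs : s ≠ 0) (t : ℝ) :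
    Summable fun m : ℤ => imageRatio c (m * s + t) := by
  simpa using (hasGaussianDecay_imageRatio c).summable_mul_comp (w := fun _ => 1) (b := 0)
    (by simp) hs t

lemma Fser_eq_fclose_mul (γ c : ℝ) {h l : ℝ} (hne : h ≠ l) :
    Fser γ c h l = fclose c γ * (∑' m : ℤ, imageRatio c (m * (l - h))
      - ∑' m : ℤ, imageRatio c (m * (h - l) + l)) := by
  have hterm : ∀ m : ℤ,
      exp (2 * γ * (l - h) * m) * gker (c - γ + 2 * (h - l) * m) 1
        - exp (2 * γ * ((h - l) * m + l)) * gker (c - γ - 2 * l - 2 * (h - l) * m) 1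
      = fclose c γ * imageRatio c (m * (l - h)) - fclose c γ * imageRatio c (m * (h - l) + l) := by
    intro m
    rw [← exp_mul_gker_eq, ← exp_mul_gker_eq]
    ring_nf
  have hA := summable_imageRatio_comp c (sub_ne_zero.2 hne.symm) 0
  have hB := summable_imageRatio_comp c (sub_ne_zero.2 hne) l
  simp only [add_zero] at hA
  rw [Fser, tsum_congr hterm, (hA.mul_left _).tsum_sub (hB.mul_left _), tsum_mul_left,
    tsum_mul_left, mul_sub]

lemma hasDerivAt_Fser_low (γ c : ℝ) {h l : ℝ} (hne : h ≠ l) :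
    HasDerivAt (fun l' => Fser γ c h l')
      (fclose c γ * (∑' m : ℤ, m * imageRatio' c (m * (l - h))
        - ∑' m : ℤ, (1 - m) * imageRatio' c (m * (h - l) + l))) l := by
  have hA := (hasGaussianDecay_imageRatio c).hasDerivAt_tsum_mul_comp_affine
    (hasGaussianDecay_imageRatio' c) (hasDerivAt_imageRatio c) (w := fun _ => 1) (b := 0)
    (by simp) (p := 1) (q := -h) (r := 0) (t := 0) (x₀ := l) (by contrapose! hne; linarith)
  have hB := (hasGaussianDecay_imageRatio c).hasDerivAt_tsum_mul_comp_affine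
    (hasGaussianDecay_imageRatio' c) (hasDerivAt_imageRatio c) (w := fun _ => 1) (b := 0)
    (by simp) (p := -1) (q := h) (r := 1) (t := 0) (x₀ := l) (by contrapose! hne; linarith)
  refine ((hA.sub hB).const_mul (fclose c γ)).congr_of_eventuallyEq ?_ |>.congr_deriv ?_
  · filter_upwards [eventually_ne_nhds hne.symm] with l' hl'
    rw [Fser_eq_fclose_mul γ c hl'.symm]
    congr 2 <;> exact tsum_congr fun m => by ring_nf
  · congr 2 <;> exact tsum_congr fun m => by ring_nf

lemma hasDerivAt_deriv_Fser_low (γ c : ℝ) {h l : ℝ} (hne : h ≠ l) :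
    HasDerivAt (fun h' => deriv (fun l' => Fser γ c h' l') l)
      (-(fclose c γ * (∑' m : ℤ, (m : ℝ) ^ 2 * imageRatio'' c (m * (l - h))
        + ∑' m : ℤ, m * (1 - m) * imageRatio'' c (m * (h - l) + l)))) h := by
  have hA := (hasGaussianDecay_imageRatio' c).hasDerivAt_tsum_mul_comp_affine
    (hasGaussianDecay_imageRatio'' c) (hasDerivAt_imageRatio' c) (w := fun m => m) (b := 1)
    (fun m => by simpa using abs_le_exp_abs (m : ℝ)) (p := -1) (q := l) (r := 0) (t := 0)
    (x₀ := h) (by contrapose! hne; linarith)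
  have hB := (hasGaussianDecay_imageRatio' c).hasDerivAt_tsum_mul_comp_affine
    (hasGaussianDecay_imageRatio'' c) (hasDerivAt_imageRatio' c) (w := fun m => 1 - m) (b := 1)
    (fun m => by simpa using abs_one_sub_le_exp_abs (m : ℝ)) (p := 1) (q := -l) (r := 0)
    (t := l) (x₀ := h) (by contrapose! hne; linarith)
  refine ((hA.sub hB).const_mul (fclose c γ)).congr_of_eventuallyEq ?_ |>.congr_deriv ?_
  · filter_upwards [eventually_ne_nhds hne] with h' hh'
    rw [(hasDerivAt_Fser_low γ c hh').deriv]
    congr 2 <;> exact tsum_congr fun m => by ring_nf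
  · rw [← mul_neg, neg_add', ← tsum_neg]
    congr 2 <;> exact tsum_congr fun m => by ring_nf

lemma Rcond_eq_tsum_imageRatio'' (c : ℝ) {h l : ℝ} (hne : h ≠ l) :
    Rcond h l c = ∑' m : ℤ, (m : ℝ) ^ 2 * imageRatio'' c (m * (l - h))
      + ∑' m : ℤ, m * (1 - m) * imageRatio'' c (m * (h - l) + l) := by
  have hs : h - l ≠ 0 := sub_ne_zero.2 hne
  have hA := (hasGaussianDecay_imageRatio'' c).summable_mul_comp
    (fun m => abs_sq_le_exp_two_mul_abs (m : ℝ)) hs 0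
  have hB := (hasGaussianDecay_imageRatio'' c).summable_mul_comp
    (fun m => abs_mul_one_sub_le_exp_two_mul_abs (m : ℝ)) hs l
  simp only [add_zero] at hA
  have hreflect : ∑' m : ℤ, (m : ℝ) ^ 2 * imageRatio'' c (m * (l - h))
      = ∑' m : ℤ, (m : ℝ) ^ 2 * imageRatio'' c (m * (h - l)) := by
    rw [← (Equiv.neg ℤ).tsum_eq]
    exact tsum_congr fun m => by simp only [Equiv.neg_apply, Int.cast_neg]; ring_nf
  rw [hreflect, ← hA.tsum_add hB, Rcond, ← tsum_mul_left]
  exact tsum_congr fun m => by rw [imageRatio''_eq, imageRatio''_eq]; ring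

theorem joint_density_high_low_close_general
    (γ h l c : ℝ) (hh : 0 < h) (hl : l < 0) :
    - deriv (fun h' => deriv (fun l' => Fser γ c h' l') l) h
      = fclose c γ * Rcond h l c := by
  have hne : h ≠ l := (hl.trans hh).ne'
  rw [(hasDerivAt_deriv_Fser_low γ c hne).deriv, neg_neg, Rcond_eq_tsum_imageRatio'' c hne]

/-- the joint density of (high, low, close) of the Wiener process with
drift `γ` on the unit interval is `Q̄(h,l,c;γ) = −∂²F/∂h∂l = f(c;γ)·𝓡(h,l|c)` on the
region `h > 0`, `l < 0`, `l < c < h`. -/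
theorem joint_density_high_low_close
    (γ h l c : ℝ) (hh : 0 < h) (hl : l < 0) (hlc : l < c) (hch : c < h) :
    - deriv (fun h' => deriv (fun l' => Fser γ c h' l') l) h
      = fclose c γ * Rcond h l c :=
  joint_density_high_low_close_general γ h l c hh hl
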